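/- Let n ≥ 2 be an integer and λ, σ ∈ ℂ. For every smooth u : B → ℂ on the open unit ball B ⊂ ℝ^{n−1}, the identity P_{σ+2}( (1−|Y|²)^{σ+2} · Δ_Y( (1−|Y|²)^{−σ} u ) ) = (1−|Y|²)^{σ+2} · Δ_Y( (1−|Y|²)^{−σ} · P_σ u ) holds at every point of B, where Δ_Y = Σⱼ ∂²/∂Yⱼ². -/

import Mathlib

/-- `∂ⱼ` on functions on `ℝ^m`. -/
noncomputable def pd {m : ℕ} (j : Fin m) (u : (Fin m → ℝ) → ℂ) (Y : Fin m → ℝ) : ℂ :=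
  fderiv ℝ u Y (Pi.single j 1)

/-- The Euler vector field `E u (Y) = Σⱼ Yⱼ ∂ⱼ u (Y)`. -/
noncomputable def euler {m : ℕ} (u : (Fin m → ℝ) → ℂ) (Y : Fin m → ℝ) : ℂ :=
  ∑ j, (Y j : ℂ) * pd j u Y

/-- The Euclidean Laplacian `Δ u = Σⱼ ∂ⱼ² u`. -/
noncomputable def lap {m : ℕ} (u : (Fin m → ℝ) → ℂ) (Y : Fin m → ℝ) : ℂ :=
  ∑ j, pd j (pd j u) Y

/-- The normal operator family `P_σ u = −(E + (n−1−σ))((E − σ)u) + Δ_Y u − λ u`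
acting on functions on `ℝ^{n−1}` (the real form of
`(YD_Y − i(n−1−σ))(YD_Y + iσ) − Δ_Y − λ`). -/
noncomputable def Pop (n : ℕ) (lam σ : ℂ) (u : (Fin (n - 1) → ℝ) → ℂ)
    (Y : Fin (n - 1) → ℝ) : ℂ :=
  -(euler (fun Z => euler u Z - σ * u Z) Y
      + ((n : ℂ) - 1 - σ) * (euler u Y - σ * u Y))
    + lap u Y - lam * u Y

/-!
Write `ρ = 1 − |Y|²`, `E` for the Euler field and `m = n − 1`. Since `E ρ = 2ρ − 2`, conjugating
`P_τ` by the weight `ρ^τ` gives `ρ^{-τ} P_τ ρ^τ = Q_τ := Δ − E² − (m + 2τ)E − τ(τ + m) − λ`: all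
terms carrying `ρ^{τ-1}` or `ρ^{τ-2}` cancel, precisely because the coefficient `n − 1` of `P_τ`
is the dimension. With `v = ρ^{-σ} u` the two sides of the identity become `ρ^{σ+2} Q_{σ+2} Δ v`
and `ρ^{σ+2} Δ Q_σ v`, and `Δ Q_σ = Q_{σ+2} Δ` follows from the commutator `Δ E = (E + 2) Δ`.
-/

open Filter Topology
open scoped ContDiff

section PartialDerivatives

variable {m : ℕ} {f g : (Fin m → ℝ) → ℂ} {Y : Fin m → ℝ}

lemma pd_congr (h : f =ᶠ[𝓝 Y] g) (j : Fin m) : pd j f Y = pd j g Y := by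
  rw [pd, pd, h.fderiv_eq]

lemma pd_eventuallyEq (h : f =ᶠ[𝓝 Y] g) (j : Fin m) : pd j f =ᶠ[𝓝 Y] pd j g :=
  h.eventuallyEq_nhds.mono fun _ hZ => pd_congr hZ j

lemma pd_add (hf : DifferentiableAt ℝ f Y) (hg : DifferentiableAt ℝ g Y) (j : Fin m) :
    pd j (fun Z => f Z + g Z) Y = pd j f Y + pd j g Y := by
  rw [pd, fderiv_fun_add hf hg]; rfl

lemma pd_sub (hf : DifferentiableAt ℝ f Y) (hg : DifferentiableAt ℝ g Y) (j : Fin m) :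
    pd j (fun Z => f Z - g Z) Y = pd j f Y - pd j g Y := by
  rw [pd, fderiv_fun_sub hf hg]; rfl

lemma pd_const_mul (hf : DifferentiableAt ℝ f Y) (a : ℂ) (j : Fin m) :
    pd j (fun Z => a * f Z) Y = a * pd j f Y := by
  rw [pd, fderiv_const_mul hf]; rfl

lemma pd_mul (hf : DifferentiableAt ℝ f Y) (hg : DifferentiableAt ℝ g Y) (j : Fin m) :
    pd j (fun Z => f Z * g Z) Y = pd j f Y * g Y + f Y * pd j g Y := by
  simp only [pd, fderiv_fun_mul hf hg, add_apply, smul_apply, smul_eq_mul]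
  ring

lemma pd_sum {ι : Type*} (s : Finset ι) {F : ι → (Fin m → ℝ) → ℂ}
    (hF : ∀ i ∈ s, DifferentiableAt ℝ (F i) Y) (j : Fin m) :
    pd j (fun Z => ∑ i ∈ s, F i Z) Y = ∑ i ∈ s, pd j (F i) Y := by
  rw [pd, fderiv_fun_sum hF, sum_apply]; rfl

lemma pd_coord (j k : Fin m) : pd j (fun Z => (Z k : ℂ)) Y = if k = j then 1 else 0 := by
  have : (fun Z : Fin m → ℝ => (Z k : ℂ)) = Complex.ofRealCLM.comp (ContinuousLinearMap.proj k) :=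
    rfl
  rw [pd, this, ContinuousLinearMap.fderiv]
  by_cases h : k = j <;> simp [h]

lemma pd_comm (hf : ContDiffAt ℝ 2 f Y) (j k : Fin m) : pd j (pd k f) Y = pd k (pd j f) Y := by
  have hD : DifferentiableAt ℝ (fderiv ℝ f) Y :=
    (hf.fderiv_right (m := 1) le_rfl).differentiableAt one_ne_zero
  have hsymm : IsSymmSndFDerivAt ℝ f Y :=
    hf.isSymmSndFDerivAt (by simp [minSmoothness_of_isRCLikeNormedField])
  have hpd : ∀ a b : Fin m,
      pd a (pd b f) Y = fderiv ℝ (fderiv ℝ f) Y (Pi.single a 1) (Pi.single b 1) := by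
    intro a b
    change fderiv ℝ (fun Z => fderiv ℝ f Z (Pi.single b 1)) Y (Pi.single a 1) = _
    rw [fderiv_clm_apply hD (differentiableAt_const _)]
    simp
  rw [hpd, hpd, hsymm]

lemma euler_congr (h : f =ᶠ[𝓝 Y] g) : euler f Y = euler g Y := by
  simp only [euler, pd_congr h]

lemma euler_eventuallyEq (h : f =ᶠ[𝓝 Y] g) : euler f =ᶠ[𝓝 Y] euler g :=
  h.eventuallyEq_nhds.mono fun _ hZ => euler_congr hZ

lemma lap_congr (h : f =ᶠ[𝓝 Y] g) : lap f Y = lap g Y := by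
  simp only [lap, pd_congr (pd_eventuallyEq h _)]

lemma lap_eventuallyEq (h : f =ᶠ[𝓝 Y] g) : lap f =ᶠ[𝓝 Y] lap g :=
  h.eventuallyEq_nhds.mono fun _ hZ => lap_congr hZ

lemma euler_add (hf : DifferentiableAt ℝ f Y) (hg : DifferentiableAt ℝ g Y) :
    euler (fun Z => f Z + g Z) Y = euler f Y + euler g Y := by
  simp only [euler, pd_add hf hg, mul_add, Finset.sum_add_distrib]

lemma euler_const_mul (hf : DifferentiableAt ℝ f Y) (a : ℂ) :
    euler (fun Z => a * f Z) Y = a * euler f Y := by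
  simp only [euler, pd_const_mul hf, Finset.mul_sum]
  exact Finset.sum_congr rfl fun _ _ => by ring

lemma euler_mul (hf : DifferentiableAt ℝ f Y) (hg : DifferentiableAt ℝ g Y) :
    euler (fun Z => f Z * g Z) Y = euler f Y * g Y + f Y * euler g Y := by
  simp only [euler, pd_mul hf hg, Finset.sum_mul, Finset.mul_sum, ← Finset.sum_add_distrib]
  exact Finset.sum_congr rfl fun _ _ => by ring

end PartialDerivatives

lemma ContDiffOn.differentiableAt_of_isOpen {E F : Type*} [NormedAddCommGroup E]
    [NormedSpace ℝ E] [NormedAddCommGroup F] [NormedSpace ℝ F] {f : E → F} {s : Set E} {x : E}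
    (hf : ContDiffOn ℝ ∞ f s) (hs : IsOpen s) (hx : x ∈ s) : DifferentiableAt ℝ f x :=
  (hf.contDiffAt (hs.mem_nhds hx)).differentiableAt (by simp)

section SmoothOnOpen

variable {m : ℕ} {s : Set (Fin m → ℝ)} {f g : (Fin m → ℝ) → ℂ} {Y : Fin m → ℝ}

lemma contDiffOn_pd (hs : IsOpen s) (hf : ContDiffOn ℝ ∞ f s) (j : Fin m) :
    ContDiffOn ℝ ∞ (pd j f) s :=
  (ContinuousLinearMap.apply ℝ ℂ (Pi.single j 1)).contDiff.comp_contDiffOn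
    (hf.fderiv_of_isOpen hs (by simp))

lemma contDiffOn_euler (hs : IsOpen s) (hf : ContDiffOn ℝ ∞ f s) :
    ContDiffOn ℝ ∞ (euler f) s :=
  ContDiffOn.sum fun j _ => (Complex.ofRealCLM.contDiff.comp (contDiff_apply ℝ ℝ j)).contDiffOn.mul
    (contDiffOn_pd hs hf j)

lemma contDiffOn_lap (hs : IsOpen s) (hf : ContDiffOn ℝ ∞ f s) : ContDiffOn ℝ ∞ (lap f) s :=
  ContDiffOn.sum fun j _ => contDiffOn_pd hs (contDiffOn_pd hs hf j) j

lemma lap_sub (hs : IsOpen s) (hf : ContDiffOn ℝ ∞ f s) (hg : ContDiffOn ℝ ∞ g s) (hY : Y ∈ s) :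
    lap (fun Z => f Z - g Z) Y = lap f Y - lap g Y := by
  simp only [lap, ← Finset.sum_sub_distrib]
  refine Finset.sum_congr rfl fun j _ => ?_
  have hpd : pd j (fun Z => f Z - g Z) =ᶠ[𝓝 Y] fun Z => pd j f Z - pd j g Z := by
    filter_upwards [hs.mem_nhds hY] with Z hZ
    exact pd_sub (hf.differentiableAt_of_isOpen hs hZ) (hg.differentiableAt_of_isOpen hs hZ) j
  rw [pd_congr hpd, pd_sub ((contDiffOn_pd hs hf j).differentiableAt_of_isOpen hs hY)
    ((contDiffOn_pd hs hg j).differentiableAt_of_isOpen hs hY)]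

lemma lap_const_mul (hs : IsOpen s) (hf : ContDiffOn ℝ ∞ f s) (hY : Y ∈ s) (a : ℂ) :
    lap (fun Z => a * f Z) Y = a * lap f Y := by
  simp only [lap, Finset.mul_sum]
  refine Finset.sum_congr rfl fun j _ => ?_
  have hpd : pd j (fun Z => a * f Z) =ᶠ[𝓝 Y] fun Z => a * pd j f Z := by
    filter_upwards [hs.mem_nhds hY] with Z hZ
    exact pd_const_mul (hf.differentiableAt_of_isOpen hs hZ) a j
  rw [pd_congr hpd, pd_const_mul ((contDiffOn_pd hs hf j).differentiableAt_of_isOpen hs hY)]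

lemma lap_mul (hs : IsOpen s) (hf : ContDiffOn ℝ ∞ f s) (hg : ContDiffOn ℝ ∞ g s) (hY : Y ∈ s) :
    lap (fun Z => f Z * g Z) Y
      = lap f Y * g Y + 2 * ∑ j, pd j f Y * pd j g Y + f Y * lap g Y := by
  have hdf := hf.differentiableAt_of_isOpen hs hY
  have hdg := hg.differentiableAt_of_isOpen hs hY
  have hdf' := fun j => (contDiffOn_pd hs hf j).differentiableAt_of_isOpen hs hY
  have hdg' := fun j => (contDiffOn_pd hs hg j).differentiableAt_of_isOpen hs hY
  have hj : ∀ j, pd j (pd j fun Z => f Z * g Z) Y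
      = pd j (pd j f) Y * g Y + 2 * (pd j f Y * pd j g Y) + f Y * pd j (pd j g) Y := by
    intro j
    have hpd : pd j (fun Z => f Z * g Z) =ᶠ[𝓝 Y] fun Z => pd j f Z * g Z + f Z * pd j g Z := by
      filter_upwards [hs.mem_nhds hY] with Z hZ
      exact pd_mul (hf.differentiableAt_of_isOpen hs hZ) (hg.differentiableAt_of_isOpen hs hZ) j
    rw [pd_congr hpd, pd_add ((hdf' j).fun_mul hdg) (hdf.fun_mul (hdg' j)), pd_mul (hdf' j) hdg,
      pd_mul hdf (hdg' j)]
    ring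
  simp only [lap, hj, Finset.sum_add_distrib, Finset.sum_mul, Finset.mul_sum]

lemma pd_euler (hs : IsOpen s) (hf : ContDiffOn ℝ ∞ f s) (hY : Y ∈ s) (k : Fin m) :
    pd k (euler f) Y = pd k f Y + euler (pd k f) Y := by
  have hcoord : ∀ l : Fin m, DifferentiableAt ℝ (fun Z : Fin m → ℝ => (Z l : ℂ)) Y :=
    fun l => by fun_prop
  have hf' := fun l => (contDiffOn_pd hs hf l).differentiableAt_of_isOpen hs hY
  have hl : ∀ l, pd k (fun Z => (Z l : ℂ) * pd l f Z) Y
      = (if l = k then pd l f Y else 0) + (Y l : ℂ) * pd l (pd k f) Y := by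
    intro l
    rw [pd_mul (hcoord l) (hf' l), pd_coord,
      pd_comm ((hf.contDiffAt (hs.mem_nhds hY)).of_le (WithTop.coe_le_coe.mpr le_top)) k l]
    split_ifs <;> ring
  have hsum : pd k (euler f) Y = ∑ l, pd k (fun Z => (Z l : ℂ) * pd l f Z) Y :=
    pd_sum _ (fun l _ => (hcoord l).mul (hf' l)) k
  simp only [hsum, hl, Finset.sum_add_distrib, Finset.sum_ite_eq', Finset.mem_univ, if_true]
  rfl

lemma lap_euler (hs : IsOpen s) (hf : ContDiffOn ℝ ∞ f s) (hY : Y ∈ s) :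
    lap (euler f) Y = euler (lap f) Y + 2 * lap f Y := by
  have hj : ∀ j, pd j (pd j (euler f)) Y
      = 2 * pd j (pd j f) Y + euler (pd j (pd j f)) Y := by
    intro j
    have hpd : pd j (euler f) =ᶠ[𝓝 Y] fun Z => pd j f Z + euler (pd j f) Z := by
      filter_upwards [hs.mem_nhds hY] with Z hZ
      exact pd_euler hs hf hZ j
    rw [pd_congr hpd, pd_add ((contDiffOn_pd hs hf j).differentiableAt_of_isOpen hs hY)
      ((contDiffOn_euler hs (contDiffOn_pd hs hf j)).differentiableAt_of_isOpen hs hY),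
      pd_euler hs (contDiffOn_pd hs hf j) hY j]
    ring
  have hEΔ : euler (lap f) Y = ∑ j, euler (pd j (pd j f)) Y := by
    have hpd : ∀ l, pd l (lap f) Y = ∑ j, pd l (pd j (pd j f)) Y := fun l =>
      pd_sum _ (fun j _ => (contDiffOn_pd hs (contDiffOn_pd hs hf j) j).differentiableAt_of_isOpen
        hs hY) l
    simp only [euler, hpd, Finset.mul_sum]
    exact Finset.sum_comm
  simp only [lap, hj, Finset.sum_add_distrib, ← Finset.mul_sum, hEΔ]
  ring

end SmoothOnOpen

noncomputable def Qop (m : ℕ) (lam τ : ℂ) (w : (Fin m → ℝ) → ℂ) (Y : Fin m → ℝ) : ℂ :=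
  lap w Y - euler (euler w) Y - ((m : ℂ) + 2 * τ) * euler w Y - (τ * (τ + m) + lam) * w Y

lemma lap_Qop {m : ℕ} {s : Set (Fin m → ℝ)} {w : (Fin m → ℝ) → ℂ} {Y : Fin m → ℝ}
    (hs : IsOpen s) (hw : ContDiffOn ℝ ∞ w s) (hY : Y ∈ s) (lam σ : ℂ) :
    lap (Qop m lam σ w) Y = Qop m lam (σ + 2) (lap w) Y := by
  have hL := contDiffOn_lap hs hw
  have hE := contDiffOn_euler hs hw
  have hEE := contDiffOn_euler hs hE
  have hLE : lap (euler w) =ᶠ[𝓝 Y] fun Z => euler (lap w) Z + 2 * lap w Z := by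
    filter_upwards [hs.mem_nhds hY] with Z hZ
    exact lap_euler hs hw hZ
  have hLEE : lap (euler (euler w)) Y
      = euler (euler (lap w)) Y + 2 * euler (lap w) Y + 2 * lap (euler w) Y := by
    rw [lap_euler hs hE hY, euler_congr hLE,
      euler_add ((contDiffOn_euler hs hL).differentiableAt_of_isOpen hs hY)
        ((hL.differentiableAt_of_isOpen hs hY).const_mul 2),
      euler_const_mul (hL.differentiableAt_of_isOpen hs hY)]
  change lap (fun Z => lap w Z - euler (euler w) Z - ((m : ℂ) + 2 * σ) * euler w Z
    - (σ * (σ + m) + lam) * w Z) Y = _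
  rw [lap_sub hs ((hL.sub hEE).sub (contDiffOn_const.mul hE)) (contDiffOn_const.mul hw) hY,
    lap_sub hs (hL.sub hEE) (contDiffOn_const.mul hE) hY, lap_sub hs hL hEE hY,
    lap_const_mul hs hE hY, lap_const_mul hs hw hY, hLEE, lap_euler hs hw hY, Qop]
  ring

def unitBall (m : ℕ) : Set (Fin m → ℝ) := {Y | ∑ j, Y j ^ 2 < 1}

section Weight

variable {m : ℕ} {Y : Fin m → ℝ}

noncomputable def rho (Y : Fin m → ℝ) : ℝ := 1 - ∑ j, Y j ^ 2

lemma isOpen_unitBall : IsOpen (unitBall m) :=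
  isOpen_lt (by fun_prop) continuous_const

lemma rho_pos (hY : Y ∈ unitBall m) : 0 < rho Y := sub_pos.mpr hY

lemma fderiv_rho_apply_single (j : Fin m) : fderiv ℝ rho Y (Pi.single j 1) = -2 * Y j := by
  have hsq : ∀ k, fderiv ℝ (fun Z : Fin m → ℝ => Z k ^ 2) Y (Pi.single j 1)
      = 2 * Y k * (Pi.single j 1 : Fin m → ℝ) k := by
    intro k
    rw [fderiv_fun_pow 2 (by fun_prop : DifferentiableAt ℝ (fun Z : Fin m → ℝ => Z k) Y),
      fderiv_apply differentiableAt_id]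
    simp
  unfold rho
  rw [fderiv_const_sub, fderiv_fun_sum fun k _ => by fun_prop]
  simp [hsq, Pi.single_apply]

lemma sum_mul_self_eq_one_sub_rho (Y : Fin m → ℝ) : ∑ j, (Y j : ℂ) * Y j = 1 - rho Y := by
  simp only [rho]
  push_cast
  simp only [sub_sub_cancel, sq]

/-- `ρ^c` on the unit ball, written as `exp (c log ρ)`: this form is visibly smooth where `ρ > 0`,
and `weight_add` holds everywhere. -/
noncomputable def weight (c : ℂ) (Y : Fin m → ℝ) : ℂ := Complex.exp (c * Real.log (rho Y))

lemma weight_add (c d : ℂ) (Y : Fin m → ℝ) : weight (c + d) Y = weight c Y * weight d Y := by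
  simp only [weight, add_mul, Complex.exp_add]

lemma weight_zero (Y : Fin m → ℝ) : weight 0 Y = 1 := by
  simp [weight]

lemma weight_neg_one (hY : Y ∈ unitBall m) : weight (-1) Y = (rho Y : ℂ)⁻¹ := by
  rw [weight, neg_one_mul, Complex.exp_neg, ← Complex.ofReal_exp, Real.exp_log (rho_pos hY)]

lemma rho_mul_weight_sub_one (hY : Y ∈ unitBall m) (c : ℂ) :
    (rho Y : ℂ) * weight (c - 1) Y = weight c Y := by
  have : (rho Y : ℂ) ≠ 0 := Complex.ofReal_ne_zero.mpr (rho_pos hY).ne'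
  rw [sub_eq_add_neg, weight_add, weight_neg_one hY]
  field_simp

lemma cpow_eventuallyEq_weight (hY : Y ∈ unitBall m) (c : ℂ) :
    (fun Z : Fin m → ℝ => ((1 - ∑ j, Z j ^ 2 : ℝ) : ℂ) ^ c) =ᶠ[𝓝 Y] weight c := by
  filter_upwards [isOpen_unitBall.mem_nhds hY] with Z hZ
  have hpos : 0 < rho Z := rho_pos hZ
  change (rho Z : ℂ) ^ c = _
  rw [Complex.cpow_def_of_ne_zero (Complex.ofReal_ne_zero.mpr hpos.ne'),
    ← Complex.ofReal_log hpos.le, weight, mul_comm]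

lemma contDiffOn_weight (c : ℂ) : ContDiffOn ℝ ∞ (weight c) (unitBall m) := by
  have hlog : ContDiffOn ℝ ∞ (fun Z : Fin m → ℝ => Real.log (rho Z)) (unitBall m) :=
    ContDiffOn.log (by unfold rho; fun_prop) fun Z hZ => (rho_pos hZ).ne'
  exact (contDiffOn_const.mul (Complex.ofRealCLM.contDiff.comp_contDiffOn hlog)).cexp

lemma pd_weight (hY : Y ∈ unitBall m) (c : ℂ) (j : Fin m) :
    pd j (weight c) Y = -2 * c * Y j * weight (c - 1) Y := by
  have hρ : DifferentiableAt ℝ rho Y := by unfold rho; fun_prop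
  have hw : HasFDerivAt (weight c) _ Y := ((Complex.ofRealCLM.hasFDerivAt.comp Y
    (hρ.hasFDerivAt.log (rho_pos hY).ne')).const_mul c).cexp
  rw [pd, hw.fderiv, sub_eq_add_neg, weight_add, weight_neg_one hY]
  simp [fderiv_rho_apply_single, weight, mul_comm, mul_assoc, mul_left_comm]

lemma euler_weight (hY : Y ∈ unitBall m) (c : ℂ) :
    euler (weight c) Y = 2 * c * (weight c Y - weight (c - 1) Y) := by
  have hsum : euler (weight c) Y = -2 * c * weight (c - 1) Y * ∑ j, (Y j : ℂ) * Y j := by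
    simp only [euler, pd_weight hY, Finset.mul_sum]
    exact Finset.sum_congr rfl fun _ _ => by ring
  rw [hsum, sum_mul_self_eq_one_sub_rho]
  linear_combination 2 * c * rho_mul_weight_sub_one hY c

lemma sum_pd_weight_mul_pd (hY : Y ∈ unitBall m) (c : ℂ) (w : (Fin m → ℝ) → ℂ) :
    ∑ j, pd j (weight c) Y * pd j w Y = -2 * c * weight (c - 1) Y * euler w Y := by
  simp only [pd_weight hY, euler, Finset.mul_sum]
  exact Finset.sum_congr rfl fun _ _ => by ring

lemma lap_weight (hY : Y ∈ unitBall m) (c : ℂ) :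
    lap (weight c) Y
      = 4 * c * (c - 1) * weight (c - 2) Y - 2 * c * (2 * (c - 1) + m) * weight (c - 1) Y := by
  have hcoord : ∀ j : Fin m, DifferentiableAt ℝ (fun Z : Fin m → ℝ => (Z j : ℂ)) Y :=
    fun j => by fun_prop
  have hW := (contDiffOn_weight (c - 1)).differentiableAt_of_isOpen isOpen_unitBall hY
  have hj : ∀ j, pd j (pd j (weight c)) Y
      = -2 * c * weight (c - 1) Y + 4 * c * (c - 1) * weight (c - 2) Y * ((Y j : ℂ) * Y j) := by
    intro j
    have hpd : pd j (weight c) =ᶠ[𝓝 Y] fun Z => -2 * c * ((Z j : ℂ) * weight (c - 1) Z) := by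
      filter_upwards [isOpen_unitBall.mem_nhds hY] with Z hZ
      rw [pd_weight hZ]
      ring
    rw [pd_congr hpd, pd_const_mul ((hcoord j).fun_mul hW), pd_mul (hcoord j) hW, pd_coord,
      pd_weight hY, if_pos rfl, sub_sub, one_add_one_eq_two]
    ring
  simp only [lap, hj, Finset.sum_add_distrib, ← Finset.mul_sum, sum_mul_self_eq_one_sub_rho,
    Finset.sum_const, Finset.card_univ, Fintype.card_fin, nsmul_eq_mul]
  have h := rho_mul_weight_sub_one hY (c - 1)
  rw [sub_sub, one_add_one_eq_two] at h
  linear_combination -4 * c * (c - 1) * h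

end Weight

lemma euler_weight_mul {m : ℕ} {w : (Fin m → ℝ) → ℂ} {Y : Fin m → ℝ}
    (hw : DifferentiableAt ℝ w Y) (hY : Y ∈ unitBall m) (c : ℂ) :
    euler (fun Z => weight c Z * w Z) Y
      = weight c Y * (euler w Y + 2 * c * w Y) - 2 * c * weight (c - 1) Y * w Y := by
  rw [euler_mul ((contDiffOn_weight c).differentiableAt_of_isOpen isOpen_unitBall hY) hw,
    euler_weight hY]
  ring

lemma Pop_congr {n : ℕ} {lam σ : ℂ} {f g : (Fin (n - 1) → ℝ) → ℂ} {Y : Fin (n - 1) → ℝ}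
    (h : f =ᶠ[𝓝 Y] g) : Pop n lam σ f Y = Pop n lam σ g Y := by
  have hE : (fun Z => euler f Z - σ * f Z) =ᶠ[𝓝 Y] fun Z => euler g Z - σ * g Z := by
    filter_upwards [euler_eventuallyEq h, h] with Z hEZ hZ
    rw [hEZ, hZ]
  rw [Pop, Pop, euler_congr hE, euler_congr h, lap_congr h, h.eq_of_nhds]

lemma Pop_weight_mul {n : ℕ} (hn : 1 ≤ n) (lam τ : ℂ) {w : (Fin (n - 1) → ℝ) → ℂ}
    (hw : ContDiffOn ℝ ∞ w (unitBall (n - 1))) {Y : Fin (n - 1) → ℝ} (hY : Y ∈ unitBall (n - 1)) :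
    Pop n lam τ (fun Z => weight τ Z * w Z) Y = weight τ Y * Qop (n - 1) lam τ w Y := by
  have hB := isOpen_unitBall (m := n - 1)
  have hE := contDiffOn_euler hB hw
  have hdw := hw.differentiableAt_of_isOpen hB hY
  have hdE := hE.differentiableAt_of_isOpen hB hY
  have hF : (fun Z => euler (fun Z => weight τ Z * w Z) Z - τ * (weight τ Z * w Z)) =ᶠ[𝓝 Y]
      fun Z => weight τ Z * (euler w Z + τ * w Z) + weight (τ - 1) Z * (-2 * τ * w Z) := by
    filter_upwards [hB.mem_nhds hY] with Z hZ
    rw [euler_weight_mul (hw.differentiableAt_of_isOpen hB hZ) hZ]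
    ring
  have hdF₁ : DifferentiableAt ℝ (fun Z => euler w Z + τ * w Z) Y := hdE.add (hdw.const_mul τ)
  have hdF₂ : DifferentiableAt ℝ (fun Z => -2 * τ * w Z) Y := hdw.const_mul _
  have hEF : euler (fun Z => euler (fun Z => weight τ Z * w Z) Z - τ * (weight τ Z * w Z)) Y
      = weight τ Y * (euler (euler w) Y + τ * euler w Y + 2 * τ * (euler w Y + τ * w Y))
        - 2 * τ * weight (τ - 1) Y * (euler w Y + τ * w Y)
        + weight (τ - 1) Y * (-2 * τ * euler w Y + 2 * (τ - 1) * (-2 * τ * w Y))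
        - 2 * (τ - 1) * weight (τ - 2) Y * (-2 * τ * w Y) := by
    rw [euler_congr hF,
      euler_add
        (((contDiffOn_weight τ).differentiableAt_of_isOpen hB hY).fun_mul hdF₁)
        (((contDiffOn_weight (τ - 1)).differentiableAt_of_isOpen hB hY).fun_mul hdF₂),
      euler_weight_mul hdF₁ hY, euler_weight_mul hdF₂ hY, euler_add hdE (hdw.const_mul τ),
      euler_const_mul hdw, euler_const_mul hdw, sub_sub, one_add_one_eq_two]
    ring
  have hcast : ((n - 1 : ℕ) : ℂ) = n - 1 := by rw [Nat.cast_sub hn, Nat.cast_one]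
  rw [Pop, hEF, hF.eq_of_nhds, lap_mul hB (contDiffOn_weight τ) hw hY, lap_weight hY,
    sum_pd_weight_mul_pd hY, Qop, hcast]
  ring

/-- the weighted intertwining identity
`P_{σ+2}((1−|Y|²)^{σ+2} Δ_Y((1−|Y|²)^{−σ} u))
   = (1−|Y|²)^{σ+2} Δ_Y((1−|Y|²)^{−σ} P_σ u)`
on the open unit ball `B ⊂ ℝ^{n−1}`, for every `u` smooth on `B`. -/
theorem stmt15 (n : ℕ) (hn : 2 ≤ n) (lam σ : ℂ)
    (u : (Fin (n - 1) → ℝ) → ℂ)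
    (hu : ContDiffOn ℝ (⊤ : ℕ∞) u {Y : Fin (n - 1) → ℝ | ∑ j, (Y j) ^ 2 < 1}) :
    ∀ Y ∈ {Y : Fin (n - 1) → ℝ | ∑ j, (Y j) ^ 2 < 1},
      Pop n lam (σ + 2)
          (fun Z => (((1 - ∑ j, (Z j) ^ 2 : ℝ)) : ℂ) ^ (σ + 2) *
            lap (fun W => (((1 - ∑ j, (W j) ^ 2 : ℝ)) : ℂ) ^ (-σ) * u W) Z) Y
        = (((1 - ∑ j, (Y j) ^ 2 : ℝ)) : ℂ) ^ (σ + 2) *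
            lap (fun W => (((1 - ∑ j, (W j) ^ 2 : ℝ)) : ℂ) ^ (-σ) *
              Pop n lam σ u W) Y := by
  intro Y hY
  have hn₁ : 1 ≤ n := by omega
  set v : (Fin (n - 1) → ℝ) → ℂ := fun Z => weight (-σ) Z * u Z
  have hv : ContDiffOn ℝ ∞ v (unitBall (n - 1)) := (contDiffOn_weight (-σ)).mul hu
  have hu_eq : u = fun Z => weight σ Z * v Z := funext fun Z => by
    rw [← mul_assoc, ← weight_add, add_neg_cancel, weight_zero, one_mul]
  have hL : (fun Z => ((1 - ∑ j, Z j ^ 2 : ℝ) : ℂ) ^ (σ + 2) *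
        lap (fun W => ((1 - ∑ j, W j ^ 2 : ℝ) : ℂ) ^ (-σ) * u W) Z)
      =ᶠ[𝓝 Y] fun Z => weight (σ + 2) Z * lap v Z :=
    (cpow_eventuallyEq_weight hY _).mul
      (lap_eventuallyEq ((cpow_eventuallyEq_weight hY _).mul EventuallyEq.rfl))
  have hR : (fun W => ((1 - ∑ j, W j ^ 2 : ℝ) : ℂ) ^ (-σ) * Pop n lam σ u W)
      =ᶠ[𝓝 Y] Qop (n - 1) lam σ v := by
    filter_upwards [cpow_eventuallyEq_weight hY (-σ), isOpen_unitBall.mem_nhds hY]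
      with Z hcpow hZ
    rw [hcpow, hu_eq, Pop_weight_mul hn₁ lam σ hv hZ, ← mul_assoc, ← weight_add,
      neg_add_cancel, weight_zero, one_mul]
  rw [Pop_congr hL, Pop_weight_mul hn₁ lam (σ + 2) (contDiffOn_lap isOpen_unitBall hv) hY,
    lap_congr hR, lap_Qop isOpen_unitBall hv hY, (cpow_eventuallyEq_weight hY _).eq_of_nhds]
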